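/- arXiv:1810.04166 — 3 statements merged into one kernel-verified Lean document; each statement's English description precedes it below -/
import Mathlib

section
/- Let G = ⟨x⟩ be a cyclic group of order n and let F be a field of characteristic 0 or prime to n. Let Φ_n(X) denote the n-th cyclotomic polynomial. Then the set of isomorphism classes of faithful irreducible F-representations of G is in bijective correspondence with the set of monic irreducible factors of Φ_n(X) over F: the representation corresponding to a monic irreducible factor f(X) of Φ_n(X) is given by x ↦ C_{f(X)}, the companion matrix of f(X), and these are, up to equivalence, exactly the faithful irreducible F-representations of G. -/
/-!
Everything is compared with the model representation on `AdjoinRoot f`, in which `x` acts by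
multiplication by the root. As `f` is irreducible, `AdjoinRoot f` is a field, so a subspace stable
under multiplication by the root is an ideal, hence trivial; and the root is a primitive `n`-th
root of unity exactly when `f ∣ Φ_n` (this needs `(n : F) ≠ 0`). In the power basis
`1, root, …, root ^ (d - 1)` multiplication by the root has matrix `C_f`, and the minimal
polynomial of `C_f` is `f`: this separates non-isomorphic companion representations.

Conversely, let `θ` be faithful and irreducible and `T = θ x`. Every `T`-stable subspace is
trivial, which forces the minimal polynomial `f` of `T` to be irreducible and makes
`a ↦ a(T) v` an isomorphism `AdjoinRoot f ≃ V` for any `v ≠ 0`. Faithfulness gives the root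
order `n`, so `f ∣ Φ_n`.
-/

open Polynomial

/-- A representation is irreducible if the space is nonzero and has no proper nonzero
invariant subspace. -/
def IsIrreducibleRep {k G V : Type*} [CommSemiring k] [Monoid G] [AddCommMonoid V]
    [Module k V] (ρ : Representation k G V) : Prop :=
  Nontrivial V ∧
    ∀ W : Submodule k V, (∀ (g : G) (v : V), v ∈ W → ρ g v ∈ W) → W = ⊥ ∨ W = ⊤

/-- Equivalence (isomorphism) of representations. -/
def RepEquiv {k G V W : Type*} [CommSemiring k] [Monoid G] [AddCommMonoid V] [Module k V]
    [AddCommMonoid W] [Module k W]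
    (ρ : Representation k G V) (σ : Representation k G W) : Prop :=
  ∃ e : V ≃ₗ[k] W, ∀ (g : G) (v : V), e (ρ g v) = σ g (e v)

/-- The companion matrix of a (monic) polynomial `f` of degree `d`: the matrix of
multiplication by `X` on `F[X]/(f)` with respect to the basis `1, X, …, X^(d-1)`. -/
def companionMatrix {F : Type*} [Field F] (f : Polynomial F) :
    Matrix (Fin f.natDegree) (Fin f.natDegree) F :=
  Matrix.of fun i j =>
    if (j : ℕ) = f.natDegree - 1 then -f.coeff i
    else if (i : ℕ) = (j : ℕ) + 1 then 1 else 0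

section Transport

variable {k G V W : Type*} [CommSemiring k] [Monoid G] [AddCommMonoid V] [Module k V]
  [AddCommMonoid W] [Module k W]

def LinearEquiv.conjRep (e : V ≃ₗ[k] W) (ρ : Representation k G V) : Representation k G W :=
  (e.conjAlgEquiv k).toMonoidHom.comp ρ

theorem LinearEquiv.conjRep_apply (e : V ≃ₗ[k] W) (ρ : Representation k G V) (g : G) :
    e.conjRep ρ g = e.conj (ρ g) :=
  rfl

theorem LinearEquiv.repEquiv_conjRep (e : V ≃ₗ[k] W) (ρ : Representation k G V) :
    RepEquiv ρ (e.conjRep ρ) :=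
  ⟨e, fun g v => by simp [conjRep_apply, conj_apply]⟩

theorem RepEquiv.exists_eq_conjRep {ρ : Representation k G V} {σ : Representation k G W}
    (h : RepEquiv ρ σ) : ∃ e : V ≃ₗ[k] W, σ = e.conjRep ρ := by
  obtain ⟨e, he⟩ := h
  refine ⟨e, MonoidHom.ext fun g => LinearMap.ext fun w => ?_⟩
  simp [LinearEquiv.conjRep_apply, LinearEquiv.conj_apply, he]

theorem LinearEquiv.injective_conjRep (e : V ≃ₗ[k] W) {ρ : Representation k G V}
    (hρ : Function.Injective ρ) : Function.Injective (e.conjRep ρ) :=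
  (e.conjAlgEquiv k).injective.comp hρ

theorem LinearEquiv.isIrreducibleRep_conjRep (e : V ≃ₗ[k] W) {ρ : Representation k G V}
    (hρ : IsIrreducibleRep ρ) : IsIrreducibleRep (e.conjRep ρ) := by
  obtain ⟨hV, hρ⟩ := hρ
  refine ⟨e.symm.toEquiv.nontrivial, fun U hU => ?_⟩
  have hcomap : ∀ (g : G) (v : V), v ∈ U.comap e.toLinearMap → ρ g v ∈ U.comap e.toLinearMap :=
    fun g v hv => by simpa [conjRep_apply, conj_apply] using hU g (e v) hv
  have hmap := Submodule.map_comap_eq_of_surjective e.surjective U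
  rcases hρ _ hcomap with h | h <;> rw [h] at hmap
  · exact .inl (by simpa using hmap.symm)
  · exact .inr (by simpa using hmap.symm)

end Transport

theorem RepEquiv.minpoly_eq {k G V W : Type*} [Field k] [Monoid G] [AddCommGroup V] [Module k V]
    [AddCommGroup W] [Module k W] {ρ : Representation k G V} {σ : Representation k G W}
    (h : RepEquiv ρ σ) (g : G) : minpoly k (σ g) = minpoly k (ρ g) := by
  obtain ⟨e, rfl⟩ := h.exists_eq_conjRep
  exact minpoly.algEquiv_eq (e.conjAlgEquiv k) (ρ g)

theorem Module.Basis.equivFun_conj_eq_toLin' {R M ι : Type*} [CommRing R] [AddCommGroup M]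
    [Module R M] [Fintype ι] [DecidableEq ι] (b : Module.Basis ι R M) (T : Module.End R M) :
    b.equivFun.conj T = Matrix.toLin' (LinearMap.toMatrix b b T) := by
  refine LinearMap.ext fun w => ?_
  obtain ⟨v, rfl⟩ := b.equivFun.surjective w
  simp [LinearEquiv.conj_apply, LinearMap.toMatrix_mulVec_repr]

section Companion

variable {F : Type*} [Field F] {f : F[X]}

theorem Polynomial.Monic.pow_natDegree_apply_of_aeval_apply_eq_zero {V : Type*} [AddCommGroup V]
    [Module F V] (hf : f.Monic) {T : Module.End F V} {v : V} (hTv : aeval T f v = 0) :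
    (T ^ f.natDegree) v = ∑ i : Fin f.natDegree, (-f.coeff i) • (T ^ (i : ℕ)) v := by
  rw [hf.as_sum] at hTv
  simp only [map_add, map_sum, map_mul, map_pow, aeval_X, aeval_C, LinearMap.add_apply,
    LinearMap.sum_apply, Module.End.mul_apply, Module.algebraMap_end_apply] at hTv
  simp only [neg_smul, Finset.sum_neg_distrib,
    Fin.sum_univ_eq_sum_range (fun i => f.coeff i • (T ^ i) v)]
  exact eq_neg_of_add_eq_zero_left hTv

theorem toMatrix_eq_companionMatrix {V : Type*} [AddCommGroup V] [Module F V] (hf : f.Monic)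
    {T : Module.End F V} {v : V} (hTv : aeval T f v = 0) (b : Module.Basis (Fin f.natDegree) F V)
    (hb : ∀ i, b i = (T ^ (i : ℕ)) v) :
    LinearMap.toMatrix b b T = companionMatrix f := by
  ext i j
  rw [LinearMap.toMatrix_apply, hb j, ← Module.End.mul_apply, ← pow_succ']
  by_cases hj : (j : ℕ) = f.natDegree - 1
  · rw [show (j : ℕ) + 1 = f.natDegree by omega,
      hf.pow_natDegree_apply_of_aeval_apply_eq_zero hTv]
    simp_rw [← hb, b.repr_sum_self]
    simp [companionMatrix, hj]
  · have hlt : (j : ℕ) + 1 < f.natDegree := by omega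
    rw [← hb ⟨j + 1, hlt⟩, b.repr_self, Finsupp.single_apply]
    simp [companionMatrix, hj, Fin.ext_iff, eq_comm]

theorem AdjoinRoot.exists_conj_lmul_root_eq_companionMatrix (hf : f.Monic) :
    ∃ e : AdjoinRoot f ≃ₗ[F] (Fin f.natDegree → F),
      e.conj (Algebra.lmul F _ (root f)) = Matrix.toLin' (companionMatrix f) := by
  refine ⟨_, (Module.Basis.equivFun_conj_eq_toLin' _ _).trans (congrArg Matrix.toLin'
    (toMatrix_eq_companionMatrix hf (v := 1) ?_ (AdjoinRoot.powerBasis hf.ne_zero).basis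
      fun i => ?_))⟩
  · rw [aeval_algHom_apply]
    simp
  · rw [← map_pow]
    exact ((AdjoinRoot.powerBasis hf.ne_zero).basis_eq_pow i).trans (by simp)

theorem minpoly_toLin'_companionMatrix (hf : f.Monic) :
    minpoly F (Matrix.toLin' (companionMatrix f)) = f := by
  obtain ⟨e, he⟩ := AdjoinRoot.exists_conj_lmul_root_eq_companionMatrix hf
  rw [← he]
  exact (minpoly.algEquiv_eq (e.conjAlgEquiv F) _).trans
    ((minpoly.algHom_eq _ Algebra.lmul_injective _).trans
      (AdjoinRoot.minpoly_powerBasis_gen_of_monic hf))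

end Companion

theorem neZero_natCast_of_ringChar {F : Type*} [Field F] {n : ℕ} (hn : n ≠ 0)
    (hchar : ringChar F = 0 ∨ (ringChar F).Coprime n) : NeZero (n : F) := by
  refine ⟨fun h => ?_⟩
  have hdvd := (ringChar.spec F n).mp h
  rcases hchar with h0 | hcop
  · exact hn (Nat.eq_zero_of_zero_dvd (h0 ▸ hdvd))
  · exact CharP.ringChar_ne_one (hcop.eq_one_of_dvd hdvd)

theorem AdjoinRoot.isPrimitiveRoot_root_iff {F : Type*} [Field F] {f : F[X]} [Fact (Irreducible f)]
    {n : ℕ} [NeZero (n : F)] : IsPrimitiveRoot (root f) n ↔ f ∣ cyclotomic n F := by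
  have : NeZero (n : AdjoinRoot f) := NeZero.nat_of_injective (algebraMap F _).injective
  rw [← isRoot_cyclotomic_iff, ← map_cyclotomic n (algebraMap F _), IsRoot, eval_map,
    ← aeval_def, aeval_eq, mk_eq_zero]

theorem injective_monoidHomOfForallMemZpowers {G G' : Type*} [Group G] [Group G'] {g : G}
    (hg : ∀ x, x ∈ Subgroup.zpowers g) {g' : G'} (h : orderOf g' = orderOf g) :
    Function.Injective (monoidHomOfForallMemZpowers hg h.dvd) := by
  refine (injective_iff_map_eq_one _).mpr fun y hy => ?_
  obtain ⟨k, rfl⟩ := Subgroup.mem_zpowers_iff.mp (hg y)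
  rw [map_zpow, monoidHomOfForallMemZpowers_apply_gen] at hy
  rwa [← orderOf_dvd_iff_zpow_eq_one, h, orderOf_dvd_iff_zpow_eq_one] at hy

theorem IsIrreducibleRep.eq_bot_or_eq_top_of_generator {k G V : Type*} [CommSemiring k] [Group G]
    [Finite G] [AddCommMonoid V] [Module k V] {ρ : Representation k G V} (hρ : IsIrreducibleRep ρ)
    {x : G} (hx : ∀ g, g ∈ Subgroup.zpowers x) (W : Submodule k V) (hW : ∀ v ∈ W, ρ x v ∈ W) :
    W = ⊥ ∨ W = ⊤ := by
  refine hρ.2 W fun g v hv => ?_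
  obtain ⟨m, rfl⟩ := mem_powers_iff_mem_zpowers.mpr (hx g)
  simpa using aeval_apply_smul_mem_of_le_comap hv (X ^ m) (ρ x) hW

theorem AdjoinRoot.exists_rep_injective_isIrreducibleRep {F G : Type*} [Field F] [Group G]
    [Finite G] {f : F[X]} [Fact (Irreducible f)] {x : G} (hx : ∀ g, g ∈ Subgroup.zpowers x)
    (hroot : IsPrimitiveRoot (root f) (orderOf x)) :
    ∃ ρ : Representation F G (AdjoinRoot f), ρ x = Algebra.lmul F _ (root f) ∧
      IsIrreducibleRep ρ ∧ Function.Injective ρ := by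
  set u := (hroot.isUnit (orderOf_pos x).ne').unit
  have hu : orderOf u = orderOf x := by rw [← orderOf_units, hroot.eq_orderOf]; rfl
  set φ := monoidHomOfForallMemZpowers hx hu.dvd
  refine ⟨(Algebra.lmul F _).toMonoidHom.comp ((Units.coeHom _).comp φ), by simp [φ, u], ?_,
    Algebra.lmul_injective.comp (Units.val_injective.comp
      (injective_monoidHomOfForallMemZpowers hx hu))⟩
  refine ⟨inferInstance, fun W hW => or_iff_not_imp_left.mpr fun hW0 => ?_⟩
  have hmul : ∀ a, ∀ w ∈ W, a * w ∈ W := fun a w hw => by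
    obtain ⟨p, rfl⟩ := mk_surjective a
    rw [← aeval_eq]
    refine aeval_apply_smul_mem_of_le_comap' hw p (root f) fun v hv => ?_
    simpa [φ, u] using hW x v hv
  obtain ⟨w, hw, hw0⟩ := (Submodule.ne_bot_iff W).mp hW0
  exact eq_top_iff.mpr fun a _ => by simpa [hw0] using hmul (a * w⁻¹) w hw

section SimpleEndomorphism

variable {F V : Type*} [Field F] [AddCommGroup V] [Module F V] {T : Module.End F V}

theorem Module.End.irreducible_minpoly [Nontrivial V] (hT : IsIntegral F T)
    (hsimple : ∀ W : Submodule F V, (∀ v ∈ W, T v ∈ W) → W = ⊥ ∨ W = ⊤) :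
    Irreducible (minpoly F T) := by
  have hunit : ∀ p q, minpoly F T = p * q → aeval T q = 0 → IsUnit p := by
    intro p q hpq hq
    have hq0 : q ≠ 0 := right_ne_zero_of_mul (hpq ▸ minpoly.ne_zero hT)
    rw [isUnit_iff_dvd_one, ← mul_dvd_mul_iff_right hq0, one_mul, ← hpq]
    exact minpoly.dvd F T hq
  refine ⟨minpoly.not_isUnit F T, fun p q hpq => ?_⟩
  have hcomm : aeval T p * T = T * aeval T p := by simpa using congrArg (aeval T) (mul_comm p X)
  have hpq_apply : ∀ v, aeval T p (aeval T q v) = 0 := fun v => by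
    rw [← Module.End.mul_apply, ← map_mul, ← hpq, minpoly.aeval, LinearMap.zero_apply]
  rcases hsimple (LinearMap.ker (aeval T p)) fun v hv => by
      rw [LinearMap.mem_ker] at hv ⊢
      rw [← Module.End.mul_apply, hcomm, Module.End.mul_apply, hv, map_zero] with h | h
  · refine .inl (hunit p q hpq (LinearMap.ext fun v => LinearMap.ker_eq_bot.mp h ?_))
    rw [hpq_apply, LinearMap.zero_apply, map_zero]
  · refine .inr (hunit q p (hpq.trans (mul_comm p q)) ?_)
    exact LinearMap.ker_eq_top.mp h

theorem Module.End.exists_linearEquiv_adjoinRoot_minpoly [Nontrivial V] (hT : IsIntegral F T)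
    (hsimple : ∀ W : Submodule F V, (∀ v ∈ W, T v ∈ W) → W = ⊥ ∨ W = ⊤) :
    ∃ e : V ≃ₗ[F] AdjoinRoot (minpoly F T),
      e.conj T = Algebra.lmul F _ (AdjoinRoot.root (minpoly F T)) := by
  have : Fact (Irreducible (minpoly F T)) := ⟨irreducible_minpoly hT hsimple⟩
  -- `AdjoinRoot.liftAlgHom` needs a commutative target, so lift `aeval T` through the quotient.
  set ψ : AdjoinRoot (minpoly F T) →ₐ[F] Module.End F V :=
    Ideal.Quotient.liftₐ _ (aeval T) fun _ hp => minpoly.dvd_iff.mp (Ideal.mem_span_singleton.mp hp)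
  have hψ : ψ (AdjoinRoot.root _) = T := (Ideal.Quotient.lift_mk _ _ _).trans (aeval_X T)
  obtain ⟨v, hv⟩ := exists_ne (0 : V)
  set φ : AdjoinRoot (minpoly F T) →ₗ[F] V := LinearMap.applyₗ v ∘ₗ ψ.toLinearMap
  have hφ : ∀ a, φ (AdjoinRoot.root _ * a) = T (φ a) := fun a => by simp [φ, hψ]
  have hinj : Function.Injective φ := by
    refine (injective_iff_map_eq_zero φ).mpr fun a ha => by_contra fun ha0 => hv ?_
    simpa [φ, ← Module.End.mul_apply, ← map_mul, ha0, ha] using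
      congrArg (ψ a⁻¹) (show ψ a v = 0 from ha)
  have hsurj : Function.Surjective φ := by
    refine LinearMap.range_eq_top.mp ((hsimple _ fun w hw => ?_).resolve_left fun h => hv ?_)
    · obtain ⟨a, rfl⟩ := hw
      exact ⟨_, hφ a⟩
    · have h1 := LinearMap.mem_range_self φ 1
      rw [h, Submodule.mem_bot] at h1
      simpa [φ] using h1
  refine ⟨(LinearEquiv.ofBijective φ ⟨hinj, hsurj⟩).symm, LinearMap.ext fun a => ?_⟩
  rw [LinearEquiv.conj_apply_apply, LinearEquiv.symm_symm, LinearEquiv.symm_apply_eq]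
  exact (hφ a).symm

end SimpleEndomorphism

theorem RepEquiv.minpoly_eq_of_companionMatrix {F G V : Type*} [Field F] [Monoid G]
    [AddCommGroup V] [Module F V] {θ : Representation F G V} {x : G} {f : F[X]} (hf : f.Monic)
    {ρ : Representation F G (Fin f.natDegree → F)} (h : RepEquiv θ ρ)
    (hρ : ρ x = Matrix.toLin' (companionMatrix f)) : minpoly F (θ x) = f := by
  rw [← h.minpoly_eq, hρ, minpoly_toLin'_companionMatrix hf]

section Cyclic

variable {F G : Type*} [Field F] [Group G] [Finite G] {x : G} [NeZero (orderOf x : F)]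

theorem exists_companionMatrix_rep (hx : ∀ g, g ∈ Subgroup.zpowers x) {f : F[X]} (hf : f.Monic)
    (hirr : Irreducible f) (hdvd : f ∣ cyclotomic (orderOf x) F) :
    ∃ ρ : Representation F G (Fin f.natDegree → F),
      ρ x = Matrix.toLin' (companionMatrix f) ∧ IsIrreducibleRep ρ ∧ Function.Injective ρ := by
  have : Fact (Irreducible f) := ⟨hirr⟩
  obtain ⟨ρ, hρx, hρirr, hρinj⟩ := AdjoinRoot.exists_rep_injective_isIrreducibleRep hx
    (AdjoinRoot.isPrimitiveRoot_root_iff.mpr hdvd)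
  obtain ⟨e, he⟩ := AdjoinRoot.exists_conj_lmul_root_eq_companionMatrix hf
  exact ⟨e.conjRep ρ, by rw [e.conjRep_apply, hρx, he],
    e.isIrreducibleRep_conjRep hρirr, e.injective_conjRep hρinj⟩

theorem exists_companionMatrix_repEquiv (hx : ∀ g, g ∈ Subgroup.zpowers x) {V : Type*}
    [AddCommGroup V] [Module F V] {θ : Representation F G V} (hθirr : IsIrreducibleRep θ)
    (hθinj : Function.Injective θ) :
    ∃ f : F[X], f.Monic ∧ Irreducible f ∧ f ∣ cyclotomic (orderOf x) F ∧
      ∃ ρ : Representation F G (Fin f.natDegree → F),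
        ρ x = Matrix.toLin' (companionMatrix f) ∧ RepEquiv θ ρ := by
  have : Nontrivial V := hθirr.1
  have hT : IsIntegral F (θ x) := IsIntegral.of_pow (orderOf_pos x) <| by
    rw [← map_pow, pow_orderOf_eq_one, map_one]
    exact isIntegral_one
  have hsimple := hθirr.eq_bot_or_eq_top_of_generator hx
  have hf := minpoly.monic hT
  have : Fact (Irreducible (minpoly F (θ x))) := ⟨Module.End.irreducible_minpoly hT hsimple⟩
  obtain ⟨e, he⟩ := Module.End.exists_linearEquiv_adjoinRoot_minpoly hT hsimple
  have hroot : IsPrimitiveRoot (AdjoinRoot.root (minpoly F (θ x))) (orderOf x) := by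
    convert IsPrimitiveRoot.orderOf (AdjoinRoot.root (minpoly F (θ x))) using 1
    calc orderOf x = orderOf (θ x) := (orderOf_injective θ hθinj x).symm
      _ = orderOf (e.conj (θ x)) := (MulEquiv.orderOf_eq (e.conjAlgEquiv F).toMulEquiv _).symm
      _ = _ := by
        rw [he]
        exact orderOf_injective (Algebra.lmul F _).toMonoidHom Algebra.lmul_injective _
  obtain ⟨e', he'⟩ := AdjoinRoot.exists_conj_lmul_root_eq_companionMatrix hf
  refine ⟨_, hf, this.out, AdjoinRoot.isPrimitiveRoot_root_iff.mp hroot,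
    (e.trans e').conjRep θ, ?_, LinearEquiv.repEquiv_conjRep _ _⟩
  rw [LinearEquiv.conjRep_apply, ← LinearEquiv.conj_trans, LinearEquiv.trans_apply, he, he']

end Cyclic

/-- Let `G = ⟨x⟩` be cyclic of order `n` and `F` a field of characteristic `0`
or prime to `n`.  The isomorphism classes of faithful irreducible `F`-representations of
`G` are in bijective correspondence with the monic irreducible factors of the `n`-th
cyclotomic polynomial `Φ_n` over `F`: the representation corresponding to such a factor `f`
is given by `x ↦ C_f` (the companion matrix of `f`), and these are, up to equivalence,
exactly the faithful irreducible `F`-representations of `G`. -/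
theorem stmt5 {F G : Type*} [Field F] [CommGroup G] [Fintype G]
    (n : ℕ) (hn : Fintype.card G = n)
    (x : G) (hx : ∀ g : G, g ∈ Subgroup.zpowers x)
    (hchar : ringChar F = 0 ∨ Nat.Coprime (ringChar F) n) :
    (∀ f : F[X], f.Monic → Irreducible f → f ∣ cyclotomic n F →
      ∃ ρ : Representation F G (Fin f.natDegree → F),
        ρ x = Matrix.toLin' (companionMatrix f) ∧
        IsIrreducibleRep ρ ∧ Function.Injective ρ) ∧
    (∀ f g : F[X], f.Monic → Irreducible f → f ∣ cyclotomic n F →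
      g.Monic → Irreducible g → g ∣ cyclotomic n F → f ≠ g →
      ∀ (ρ : Representation F G (Fin f.natDegree → F))
        (σ : Representation F G (Fin g.natDegree → F)),
        ρ x = Matrix.toLin' (companionMatrix f) → σ x = Matrix.toLin' (companionMatrix g) →
        ¬ RepEquiv ρ σ) ∧
    (∀ (V : Type*) [AddCommGroup V] [Module F V] (θ : Representation F G V),
      IsIrreducibleRep θ → Function.Injective θ →
      ∃! f : {f : F[X] // f.Monic ∧ Irreducible f ∧ f ∣ cyclotomic n F},
        ∃ ρ : Representation F G (Fin (f : F[X]).natDegree → F),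
          ρ x = Matrix.toLin' (companionMatrix (f : F[X])) ∧ RepEquiv θ ρ) := by
  obtain rfl : orderOf x = n := by
    rw [orderOf_eq_card_of_forall_mem_zpowers hx, Nat.card_eq_fintype_card, hn]
  have : NeZero (orderOf x : F) := neZero_natCast_of_ringChar (orderOf_pos x).ne' hchar
  refine ⟨fun f hf hirr hdvd => exists_companionMatrix_rep hx hf hirr hdvd, ?_, ?_⟩
  · intro f g hf _ _ hg _ _ hne ρ σ hρ hσ h
    rw [← h.minpoly_eq_of_companionMatrix hg hσ, hρ, minpoly_toLin'_companionMatrix hf] at hne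
    exact hne rfl
  · intro V _ _ θ hθirr hθinj
    obtain ⟨f, hf, hfirr, hfdvd, ρ, hρ, hθρ⟩ := exists_companionMatrix_repEquiv hx hθirr hθinj
    refine ⟨⟨f, hf, hfirr, hfdvd⟩, ⟨ρ, hρ, hθρ⟩, fun ⟨g, hg, _⟩ ⟨σ, hσ, hθσ⟩ => Subtype.ext ?_⟩
    exact (hθσ.minpoly_eq_of_companionMatrix hg hσ).symm.trans
      (hθρ.minpoly_eq_of_companionMatrix hf hρ)
end

section
/- Let G be a finite abelian group, F a field of characteristic 0 or prime to |G|, and K a subgroup of G such that G/K is cyclic of order n generated by xK for some x ∈ G. If e = Σ_{i=0}^{n−1} α_i (xK)^i (with α_i ∈ F) is a primitive central idempotent of F[G/K] corresponding to a faithful irreducible F-representation of G/K, then e_K · Σ_{i=0}^{n−1} α_i x^i is a primitive central idempotent of F[G], where e_K = (1/|K|) Σ_{k∈K} k. Moreover, every primitive central idempotent of F[G] arises in this way from some such K and e. -/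
/-!
Let `π : F[G] → F[G/K]` be induced by `G → G/K`. Since `k e_K = e_K` for `k ∈ K`, the assignment
`gK ↦ g e_K` is well defined and inverts `π` on the ideal `F[G] e_K`; so `π` matches the primitive
idempotents of `F[G]` lying below `e_K` with those of `F[G/K]`, which gives the first part.

Conversely, let `E` be primitive. By Maschke's theorem `F[G]` is semisimple, hence so is
`F[G] / (1 - E)`, whose only idempotents are `0` and `1` by primitivity; so it is a field. The
kernel `K = {g | g E = E}` of `G → (F[G] / (1 - E))ˣ` then has cyclic quotient `G/K`, and `E` lies
below `e_K`. Thus `π E` is primitive, faithful on `G/K` by the choice of `K`, and expanding it in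
powers of a generator `xK` exhibits `E` in the required form.
-/

/-- A primitive central idempotent of a ring: a nonzero central idempotent which cannot be
written as the sum of two nonzero orthogonal central idempotents. -/
def IsPrimitiveCentralIdempotent {R : Type*} [Ring R] (e : R) : Prop :=
  IsIdempotentElem e ∧ e ∈ Set.center R ∧ e ≠ 0 ∧
    ∀ f g : R, IsIdempotentElem f → IsIdempotentElem g → f ∈ Set.center R →
      g ∈ Set.center R → f * g = 0 → e = f + g → f = 0 ∨ g = 0

open scoped Classical

section Transfer

variable {R S : Type*} [CommRing R] [CommRing S]

theorem isPrimitiveCentralIdempotent_iff_of_comm {e : R} :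
    IsPrimitiveCentralIdempotent e ↔ IsIdempotentElem e ∧ e ≠ 0 ∧
      ∀ f g : R, IsIdempotentElem f → IsIdempotentElem g → f * g = 0 → e = f + g →
        f = 0 ∨ g = 0 := by
  simp [IsPrimitiveCentralIdempotent, Set.center_eq_univ]

theorem IsIdempotentElem.mul_add_eq_self {f g : R} (hf : IsIdempotentElem f) (hfg : f * g = 0) :
    f * (f + g) = f := by
  rw [mul_add, hf.eq, hfg, add_zero]

variable {φ : R →+* S} {e E : R} (he : E * e = E) (hinj : Set.InjOn φ {x | x * e = x})
include he hinj

theorem IsPrimitiveCentralIdempotent.of_map (h : IsPrimitiveCentralIdempotent (φ E)) :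
    IsPrimitiveCentralIdempotent E := by
  rw [isPrimitiveCentralIdempotent_iff_of_comm] at h ⊢
  obtain ⟨hidem, hne, hprim⟩ := h
  have hzero : ∀ x, x * E = x → φ x = 0 → x = 0 := fun x hx h0 =>
    hinj (by rw [Set.mem_ofPred_eq, ← hx, mul_assoc, he]) (zero_mul e) (h0.trans φ.map_zero.symm)
  refine ⟨hinj (by rw [Set.mem_ofPred_eq, mul_assoc, he]) he (by rw [map_mul, hidem.eq]),
    fun h0 => hne (by rw [h0, map_zero]), fun f g hf hg hfg hE => ?_⟩
  have hfE : f * E = f := by rw [hE, hf.mul_add_eq_self hfg]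
  have hgE : g * E = g := by rw [hE, add_comm, hg.mul_add_eq_self (by rw [mul_comm, hfg])]
  exact (hprim (φ f) (φ g) (hf.map φ) (hg.map φ) (by rw [← map_mul, hfg, map_zero])
    (by rw [hE, map_add])).imp (hzero f hfE) (hzero g hgE)

theorem IsPrimitiveCentralIdempotent.map (hφ : Function.Surjective φ)
    (h : IsPrimitiveCentralIdempotent E) : IsPrimitiveCentralIdempotent (φ E) := by
  rw [isPrimitiveCentralIdempotent_iff_of_comm] at h ⊢
  obtain ⟨hidem, hne, hprim⟩ := h
  have hmem : ∀ x, x * E = x → x * e = x := fun x hx => by rw [← hx, mul_assoc, he]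
  refine ⟨hidem.map φ, fun h0 => hne (hinj (hmem E hidem.eq) (zero_mul e) (by rw [h0, map_zero])),
    fun f' g' hf' hg' hfg' hE' => ?_⟩
  obtain ⟨u, rfl⟩ := hφ f'
  set f := u * E
  have hfE : f * E = f := by rw [mul_assoc, hidem.eq]
  have hgE : (E - f) * E = E - f := by rw [sub_mul, hidem.eq, hfE]
  have hφf : φ f = φ u := by rw [map_mul, hE', hf'.mul_add_eq_self hfg']
  have hφg : φ (E - f) = g' := by rw [map_sub, hφf, hE', add_sub_cancel_left]
  have hfidem : IsIdempotentElem f :=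
    hinj (hmem _ (by rw [mul_assoc, hfE])) (hmem f hfE) (by rw [map_mul, hφf, hf'.eq])
  have hgidem : IsIdempotentElem (E - f) :=
    hinj (hmem _ (by rw [mul_assoc, hgE])) (hmem _ hgE) (by rw [map_mul, hφg, hg'.eq])
  have hfg : f * (E - f) = 0 :=
    hinj (hmem _ (by rw [mul_assoc, hgE])) (zero_mul e) (by rw [map_mul, hφf, hφg, hfg', map_zero])
  exact (hprim f (E - f) hfidem hgidem hfg (add_sub_cancel f E).symm).imp
    (fun h0 => by rw [← hφf, h0, map_zero]) (fun h0 => by rw [← hφg, h0, map_zero])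

end Transfer

theorem IsIdempotentElem.mk_eq_mk_iff_mul_eq {R : Type*} [CommRing R] {E : R}
    (hE : IsIdempotentElem E) {x y : R} :
    Ideal.Quotient.mk (Ideal.span {1 - E}) x = Ideal.Quotient.mk _ y ↔ x * E = y * E := by
  rw [Ideal.Quotient.mk_eq_mk_iff_sub_mem, Ideal.mem_span_singleton', ← sub_eq_zero, ← sub_mul]
  constructor
  · rintro ⟨c, hc⟩
    rw [← hc, mul_assoc, sub_mul, one_mul, hE.eq, sub_self, mul_zero]
  · exact fun h => ⟨x - y, by rw [mul_sub, mul_one, h, sub_zero]⟩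

section Semisimple

variable {R : Type*} [CommRing R] [IsSemisimpleRing R]

theorem isField_of_isPrimitiveCentralIdempotent_one (h : IsPrimitiveCentralIdempotent (1 : R)) :
    IsField R := by
  rw [isPrimitiveCentralIdempotent_iff_of_comm] at h
  have : Nontrivial R := ⟨⟨1, 0, h.2.1⟩⟩
  refine Ring.isField_iff_isSimpleOrder_ideal.mpr ⟨fun I => ?_⟩
  obtain ⟨e, he, rfl⟩ := IsSemisimpleRing.ideal_eq_span_idempotent I
  rcases h.2.2 e (1 - e) he he.one_sub (by rw [mul_sub, mul_one, he.eq, sub_self])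
    (add_sub_cancel e 1).symm with h0 | h0
  · exact Or.inl (by rw [h0, Ideal.span_singleton_eq_bot])
  · exact Or.inr (by rw [← sub_eq_zero.mp h0, Ideal.span_singleton_one])

theorem IsPrimitiveCentralIdempotent.isField_quotient {E : R}
    (h : IsPrimitiveCentralIdempotent E) : IsField (R ⧸ Ideal.span {1 - E}) := by
  have hidem : IsIdempotentElem E := h.1
  set π := Ideal.Quotient.mk (Ideal.span {1 - E})
  have hinj : Set.InjOn π {x | x * E = x} := fun x hx y hy hxy => by
    rw [← Set.mem_ofPred_eq.mp hx, ← Set.mem_ofPred_eq.mp hy]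
    exact hidem.mk_eq_mk_iff_mul_eq.mp hxy
  have hπE : π E = 1 := by rw [← map_one π, hidem.mk_eq_mk_iff_mul_eq, hidem.eq, one_mul]
  have : IsSemisimpleRing (R ⧸ Ideal.span {1 - E}) :=
    π.isSemisimpleRing_of_surjective Ideal.Quotient.mk_surjective
  exact isField_of_isPrimitiveCentralIdempotent_one
    (hπE ▸ h.map hidem.eq hinj Ideal.Quotient.mk_surjective)

end Semisimple

theorem natCast_ne_zero_of_ringChar {F : Type*} [Field F] {n : ℕ} (hn : n ≠ 0)
    (h : ringChar F = 0 ∨ (ringChar F).Coprime n) : (n : F) ≠ 0 := by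
  rw [Ne, ringChar.spec]
  intro hdvd
  rcases h with h | h
  · exact hn (Nat.eq_zero_of_zero_dvd (h ▸ hdvd))
  · exact CharP.ringChar_ne_one (h.eq_one_of_dvd hdvd)

theorem natCard_subgroup_ne_zero {F G : Type*} [Field F] [Group G] (hG : (Nat.card G : F) ≠ 0)
    (K : Subgroup G) : (Nat.card K : F) ≠ 0 :=
  left_ne_zero_of_mul (by rwa [← Nat.cast_mul, K.card_mul_index])

open MonoidAlgebra

theorem MonoidAlgebra.mapDomainAlgHom_surjective {F M N : Type*} [CommSemiring F] [Monoid M]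
    [Monoid N] {f : M →* N} (hf : Function.Surjective f) :
    Function.Surjective (mapDomainAlgHom F F f) := by
  intro a
  induction a using induction_linear with
  | zero => exact ⟨0, map_zero _⟩
  | add a b ha hb =>
    obtain ⟨x, rfl⟩ := ha
    obtain ⟨y, rfl⟩ := hb
    exact ⟨x + y, map_add _ _ _⟩
  | single n c =>
    obtain ⟨m, rfl⟩ := hf n
    exact ⟨single m c, by simp⟩

theorem exists_sum_range_smul_of_pow_eq {F Q : Type*} [Field F] [Group Q] [Finite Q]
    {y : Q} (hy : ∀ q, q ∈ Subgroup.zpowers y) (a : F[Q]) :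
    ∃ α : ℕ → F, ∑ i ∈ Finset.range (Nat.card Q), α i • of F Q (y ^ i) = a := by
  have hpow : ∀ q : Q, ∃ i < Nat.card Q, y ^ i = q := fun q => by
    obtain ⟨i, hi, h⟩ := Finset.mem_image.mp <| (mem_powers_iff_mem_range_orderOf (x := y)).mp
      (mem_powers_iff_mem_zpowers.mpr (hy q))
    exact ⟨i, by rwa [Finset.mem_range, orderOf_eq_card_of_forall_mem_zpowers hy] at hi, h⟩
  induction a using MonoidAlgebra.induction_linear with
  | zero => exact ⟨0, by simp⟩
  | add a b ha hb =>
    obtain ⟨α, rfl⟩ := ha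
    obtain ⟨β, rfl⟩ := hb
    exact ⟨α + β, by simp [add_smul, Finset.sum_add_distrib]⟩
  | single q c =>
    obtain ⟨i, hi, rfl⟩ := hpow q
    exact ⟨fun j => if j = i then c else 0, by simp [ite_smul, hi]⟩

theorem mapDomain_mk_sum_smul_of_pow {F G : Type*} [Field F] [Group G] (K : Subgroup G) [K.Normal]
    (x : G) (n : ℕ) (α : ℕ → F) :
    mapDomainAlgHom F F (QuotientGroup.mk' K) (∑ i ∈ Finset.range n, α i • of F G (x ^ i)) =
      ∑ i ∈ Finset.range n, α i • of F (G ⧸ K) ((x : G ⧸ K) ^ i) := by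
  simp

section Average

variable (F : Type*) [Field F] {G : Type*} [Group G] (K : Subgroup G) [Fintype K]

noncomputable def subgroupAverage : F[G] := (Nat.card K : F)⁻¹ • ∑ k : K, of F G k

variable {F K}

theorem of_mul_subgroupAverage {k : G} (hk : k ∈ K) :
    of F G k * subgroupAverage F K = subgroupAverage F K := by
  rw [subgroupAverage, mul_smul_comm, Finset.mul_sum]
  congr 1
  exact Fintype.sum_equiv (Equiv.mulLeft (⟨k, hk⟩ : K)) _ _ fun k' => (map_mul (of F G) k k').symm

theorem inv_natCard_smul_sum_const {A : Type*} [AddCommGroup A] [Module F A]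
    (hK : (Nat.card K : F) ≠ 0) (a : A) : (Nat.card K : F)⁻¹ • ∑ _k : K, a = a := by
  rw [Finset.sum_const, Finset.card_univ, ← Nat.card_eq_fintype_card, ← Nat.cast_smul_eq_nsmul F,
    smul_smul, inv_mul_cancel₀ hK, one_smul]

theorem subgroupAverage_mul_eq_self (hK : (Nat.card K : F) ≠ 0) {x : F[G]}
    (hx : ∀ k ∈ K, of F G k * x = x) : subgroupAverage F K * x = x := by
  rw [subgroupAverage, smul_mul_assoc, Finset.sum_mul, Finset.sum_congr rfl fun k _ => hx _ k.2,
    inv_natCard_smul_sum_const hK]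

theorem isIdempotentElem_subgroupAverage (hK : (Nat.card K : F) ≠ 0) :
    IsIdempotentElem (subgroupAverage F K) :=
  subgroupAverage_mul_eq_self hK fun _ hk => of_mul_subgroupAverage hk

theorem of_mul_subgroupAverage_eq_of_mk_eq {g g' : G} (h : (g : G ⧸ K) = g') :
    of F G g * subgroupAverage F K = of F G g' * subgroupAverage F K := by
  rw [← mul_inv_cancel_left g g', map_mul, mul_assoc,
    of_mul_subgroupAverage (QuotientGroup.eq.mp h)]

variable [K.Normal]

theorem mapDomain_mk_subgroupAverage (hK : (Nat.card K : F) ≠ 0) :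
    mapDomainAlgHom F F (QuotientGroup.mk' K) (subgroupAverage F K) = 1 := by
  have hk : ∀ k : K, mapDomainAlgHom F F (QuotientGroup.mk' K) (of F G k) = 1 := fun k => by
    simp [(QuotientGroup.eq_one_iff _).mpr k.2, one_def]
  rw [subgroupAverage, map_smul, map_sum, Finset.sum_congr rfl fun k _ => hk k,
    inv_natCard_smul_sum_const hK]

theorem injOn_mapDomain_mk :
    Set.InjOn (mapDomainAlgHom F F (QuotientGroup.mk' K)) {x | x * subgroupAverage F K = x} := by
  set π := mapDomainAlgHom F F (QuotientGroup.mk' K)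
  -- `s (gK) = g e_K` is well defined as `e_K` absorbs `K`; `s ∘ π` is right multiplication by `e_K`
  set s := liftNC (algebraMap F F[G]).toAddMonoidHom
    fun q : G ⧸ K => of F G q.out * subgroupAverage F K
  have hs : s.comp π.toLinearMap.toAddMonoidHom = AddMonoidHom.mulRight (subgroupAverage F K) := by
    refine addMonoidHom_ext fun g c => ?_
    simp only [s, π, AddMonoidHom.comp_apply, AddMonoidHom.coe_mulRight,
      LinearMap.toAddMonoidHom_coe, AlgHom.toLinearMap_apply, mapDomainAlgHom_apply,
      QuotientGroup.coe_mk', mapDomain_single, liftNC_single, AddMonoidHom.coe_coe, of_apply,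
      RingHom.toAddMonoidHom_eq_coe, coe_algebraMap, Algebra.algebraMap_self, RingHom.coe_id,
      Function.comp_apply, id_eq]
    rw [← mul_assoc, single_mul_single, one_mul, mul_one, ← smul_of, ← smul_of, smul_mul_assoc,
      smul_mul_assoc, of_mul_subgroupAverage_eq_of_mk_eq (QuotientGroup.out_eq' _)]
  intro x hx y hy hxy
  calc x = s (π x) := hx.symm.trans (DFunLike.congr_fun hs x).symm
    _ = y := by rw [hxy]; exact (DFunLike.congr_fun hs y).trans hy

theorem eq_one_of_of_mul_mapDomain_mk_eq {E : F[G]} (hKE : ∀ g, g ∈ K ↔ of F G g * E = E)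
    (hEK : E * subgroupAverage F K = E) {q : G ⧸ K}
    (hq : of F (G ⧸ K) q * mapDomainAlgHom F F (QuotientGroup.mk' K) E =
      mapDomainAlgHom F F (QuotientGroup.mk' K) E) : q = 1 := by
  obtain ⟨g, rfl⟩ := QuotientGroup.mk_surjective q
  have hgE : of F G g * E = E :=
    injOn_mapDomain_mk (by rw [Set.mem_ofPred_eq, mul_assoc, hEK]) hEK
      (by rw [map_mul]; simpa using hq)
  exact (QuotientGroup.eq_one_iff g).mpr ((hKE g).mpr hgE)

end Average

section Comm

variable {F G : Type*} [Field F] [CommGroup G] {K : Subgroup G} [Fintype K]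
  (hK : (Nat.card K : F) ≠ 0)
include hK

theorem subgroupAverage_mul_mul_subgroupAverage (S : F[G]) :
    subgroupAverage F K * S * subgroupAverage F K = subgroupAverage F K * S := by
  rw [mul_right_comm, (isIdempotentElem_subgroupAverage hK).eq]

theorem mapDomain_mk_subgroupAverage_mul (S : F[G]) :
    mapDomainAlgHom F F (QuotientGroup.mk' K) (subgroupAverage F K * S) =
      mapDomainAlgHom F F (QuotientGroup.mk' K) S := by
  rw [map_mul, mapDomain_mk_subgroupAverage hK, one_mul]

theorem isPrimitiveCentralIdempotent_subgroupAverage_mul {S : F[G]}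
    (h : IsPrimitiveCentralIdempotent (mapDomainAlgHom F F (QuotientGroup.mk' K) S)) :
    IsPrimitiveCentralIdempotent (subgroupAverage F K * S) := by
  rw [← mapDomain_mk_subgroupAverage_mul hK] at h
  exact h.of_map (subgroupAverage_mul_mul_subgroupAverage hK S) injOn_mapDomain_mk

theorem eq_subgroupAverage_mul_of_mapDomain_mk_eq {E S : F[G]} (hEK : E * subgroupAverage F K = E)
    (hS : mapDomainAlgHom F F (QuotientGroup.mk' K) S =
      mapDomainAlgHom F F (QuotientGroup.mk' K) E) :
    E = subgroupAverage F K * S :=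
  injOn_mapDomain_mk hEK (subgroupAverage_mul_mul_subgroupAverage hK S)
    (by rw [mapDomain_mk_subgroupAverage_mul hK, hS])

end Comm

theorem IsPrimitiveCentralIdempotent.mapDomain_mk {F G : Type*} [Field F] [CommGroup G]
    {K : Subgroup G} [Fintype K] {E : F[G]} (hEK : E * subgroupAverage F K = E)
    (h : IsPrimitiveCentralIdempotent E) :
    IsPrimitiveCentralIdempotent (mapDomainAlgHom F F (QuotientGroup.mk' K) E) :=
  h.map hEK injOn_mapDomain_mk (mapDomainAlgHom_surjective (QuotientGroup.mk'_surjective K))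

theorem IsPrimitiveCentralIdempotent.exists_isCyclic_quotient {F G : Type*} [Field F]
    [CommGroup G] [Finite G] (hG : (Nat.card G : F) ≠ 0) {E : F[G]}
    (h : IsPrimitiveCentralIdempotent E) :
    ∃ K : Subgroup G, (∀ g, g ∈ K ↔ of F G g * E = E) ∧ IsCyclic (G ⧸ K) := by
  have : NeZero (Nat.card G : F) := ⟨hG⟩
  let χ : G →* F[G] ⧸ Ideal.span {1 - E} := (Ideal.Quotient.mk _).toMonoidHom.comp (of F G)
  refine ⟨χ.ker, fun g => ?_, ?_⟩
  · rw [MonoidHom.mem_ker, ← map_one χ]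
    exact h.1.mk_eq_mk_iff_mul_eq.trans (by rw [map_one, one_mul])
  · have := h.isField_quotient.isDomain
    exact isCyclic_of_injective_ringHom _ ((QuotientGroup.injective_lift_iff _ χ le_rfl).mpr rfl)

/-- Let `G` be a finite abelian group, `F` a field of characteristic `0` or
prime to `|G|`, and `K ≤ G` with `G/K` cyclic of order `n` generated by `xK`.  If
`e = ∑_{i<n} α_i (xK)^i` is a primitive central idempotent of `F[G/K]` corresponding to a
faithful irreducible `F`-representation of `G/K` (faithfulness of the corresponding
representation on `F[G/K]e` being expressed by: `qK·e = e` implies `qK = 1`), then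
`e_K · ∑_{i<n} α_i x^i` is a primitive central idempotent of `F[G]`, where
`e_K = (1/|K|) ∑_{k∈K} k`.  Moreover every primitive central idempotent of `F[G]` arises in
this way. -/
theorem stmt12 {F G : Type*} [Field F] [CommGroup G] [Fintype G]
    (hchar : ringChar F = 0 ∨ Nat.Coprime (ringChar F) (Fintype.card G)) :
    (∀ (K : Subgroup G) (x : G) (n : ℕ) (α : ℕ → F),
      Nat.card (G ⧸ K) = n →
      (∀ g : G ⧸ K, g ∈ Subgroup.zpowers (QuotientGroup.mk x : G ⧸ K)) →
      IsPrimitiveCentralIdempotent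
        (∑ i ∈ Finset.range n,
          α i • MonoidAlgebra.of F (G ⧸ K) ((QuotientGroup.mk x : G ⧸ K) ^ i)) →
      (∀ q : G ⧸ K,
        MonoidAlgebra.of F (G ⧸ K) q *
            (∑ i ∈ Finset.range n,
              α i • MonoidAlgebra.of F (G ⧸ K) ((QuotientGroup.mk x : G ⧸ K) ^ i))
          = (∑ i ∈ Finset.range n,
              α i • MonoidAlgebra.of F (G ⧸ K) ((QuotientGroup.mk x : G ⧸ K) ^ i)) →
        q = 1) →
      IsPrimitiveCentralIdempotent
        (((Nat.card K : F)⁻¹ • ∑ k : K, MonoidAlgebra.of F G (k : G)) *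
          ∑ i ∈ Finset.range n, α i • MonoidAlgebra.of F G (x ^ i))) ∧
    (∀ E : MonoidAlgebra F G, IsPrimitiveCentralIdempotent E →
      ∃ (K : Subgroup G) (x : G) (n : ℕ) (α : ℕ → F),
        Nat.card (G ⧸ K) = n ∧
        (∀ g : G ⧸ K, g ∈ Subgroup.zpowers (QuotientGroup.mk x : G ⧸ K)) ∧
        IsPrimitiveCentralIdempotent
          (∑ i ∈ Finset.range n,
            α i • MonoidAlgebra.of F (G ⧸ K) ((QuotientGroup.mk x : G ⧸ K) ^ i)) ∧
        (∀ q : G ⧸ K,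
          MonoidAlgebra.of F (G ⧸ K) q *
              (∑ i ∈ Finset.range n,
                α i • MonoidAlgebra.of F (G ⧸ K) ((QuotientGroup.mk x : G ⧸ K) ^ i))
            = (∑ i ∈ Finset.range n,
                α i • MonoidAlgebra.of F (G ⧸ K) ((QuotientGroup.mk x : G ⧸ K) ^ i)) →
          q = 1) ∧
        E = ((Nat.card K : F)⁻¹ • ∑ k : K, MonoidAlgebra.of F G (k : G)) *
              ∑ i ∈ Finset.range n, α i • MonoidAlgebra.of F G (x ^ i)) := by
  have hG : (Nat.card G : F) ≠ 0 :=
    Nat.card_eq_fintype_card (α := G) ▸ natCast_ne_zero_of_ringChar Fintype.card_ne_zero hchar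
  refine ⟨fun K x n α _ _ h _ => ?_, fun E h => ?_⟩
  · rw [← mapDomain_mk_sum_smul_of_pow K] at h
    exact isPrimitiveCentralIdempotent_subgroupAverage_mul (natCard_subgroup_ne_zero hG K) h
  obtain ⟨K, hKE, hcyc⟩ := h.exists_isCyclic_quotient hG
  have hK := natCard_subgroup_ne_zero hG K
  have hEK : E * subgroupAverage F K = E :=
    (mul_comm _ _).trans (subgroupAverage_mul_eq_self hK fun k hk => (hKE k).mp hk)
  obtain ⟨y, hy⟩ := IsCyclic.exists_generator (α := G ⧸ K)
  obtain ⟨x, rfl⟩ := QuotientGroup.mk_surjective y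
  obtain ⟨α, hα⟩ :=
    exists_sum_range_smul_of_pow_eq hy (mapDomainAlgHom F F (QuotientGroup.mk' K) E)
  refine ⟨K, x, _, α, rfl, hy, hα ▸ h.mapDomain_mk hEK,
    fun q hq => eq_one_of_of_mul_mapDomain_mk_eq hKE hEK (hα ▸ hq), ?_⟩
  exact eq_subgroupAverage_mul_of_mapDomain_mk_eq hK hEK
    (by rw [mapDomain_mk_sum_smul_of_pow K, hα])
end

section
/- Let G be a finite group, H a normal subgroup of prime index p, and x ∈ G with xH generating G/H. Let η be an irreducible complex representation of H with primitive central idempotent e_η ∈ ℂ[H] ⊆ ℂ[G]. If e_η is not central in ℂ[G], then the induced representations η↑_H^G, η^x↑_H^G, …, η^{x^{p−1}}↑_H^G are all equivalent to a single irreducible complex representation ρ of G, and e_ρ = e_η + e_{η^x} + ⋯ + e_{η^{x^{p−1}}}, where η^{x^j} denotes the conjugate representation h ↦ η(x^j h x^{−j}). -/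
/-- The primitive central idempotent `e_η = (deg η / |K|) ∑_{k ∈ K} χ_η(k⁻¹) k` attached to
a complex representation `η` of a finite group `K`, written as an element of `ℂ[G]` via a
homomorphism `φ : K →* G`. -/
noncomputable def pciMap {K G : Type*} [Group K] [Group G] [Finite K] {W : Type*}
    [AddCommGroup W] [Module ℂ W] (φ : K →* G) (η : Representation ℂ K W) :
    MonoidAlgebra ℂ G :=
  haveI := Fintype.ofFinite K
  ∑ k : K, ((Module.finrank ℂ W : ℂ) / (Nat.card K : ℂ) * LinearMap.trace ℂ W (η k⁻¹)) •
      MonoidAlgebra.of ℂ G (φ k)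

/-- The space of the representation of `G` induced from a representation `η` of a subgroup
`H ≤ G`: functions `f : G → W` with `f (h * g) = η h (f g)`. -/
def inducedSpace {G : Type*} [Group G] (H : Subgroup G) {W : Type*} [AddCommGroup W]
    [Module ℂ W] (η : Representation ℂ H W) : Submodule ℂ (G → W) where
  carrier := {f | ∀ (h : H) (g : G), f ((h : G) * g) = η h (f g)}
  add_mem' := by
    intro f g hf hg h x
    simp only [Pi.add_apply, hf h x, hg h x, map_add]
  zero_mem' := by
    intro h x
    simp
  smul_mem' := by
    intro c f hf h x
    simp only [Pi.smul_apply, hf h x, map_smul]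

/-- The representation of `G` induced from the representation `η` of the subgroup `H`,
realized on `inducedSpace H η` by right translation: `(g • f) g' = f (g' * g)`. -/
def inducedRep {G : Type*} [Group G] (H : Subgroup G) {W : Type*} [AddCommGroup W]
    [Module ℂ W] (η : Representation ℂ H W) :
    Representation ℂ G (inducedSpace H η) where
  toFun g :=
    { toFun := fun f => ⟨fun g' => (f : G → W) (g' * g), fun h x => by
        simpa [mul_assoc] using f.2 h (x * g)⟩
      map_add' := fun f₁ f₂ => by ext g'; simp
      map_smul' := fun c f₁ => by ext g'; simp }
  map_one' := by
    ext f g'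
    simp
  map_mul' := fun g₁ g₂ => by
    ext f g'
    simp [mul_assoc]

/-- The conjugation automorphism `h ↦ x h x⁻¹` of a normal subgroup `H ⊴ G`. -/
def conjHom {G : Type*} [Group G] (H : Subgroup G) [hH : H.Normal] (x : G) : H →* H where
  toFun h := ⟨x * (h : G) * x⁻¹, hH.conj_mem _ h.2 x⟩
  map_one' := by ext; simp
  map_mul' := fun a b => by
    ext
    simp only [Subgroup.coe_mul, MulMemClass.mk_mul_mk]
    group

/-!
Since `H` has prime index and `e_η` is not central, the inertia group of the character of `η`
is `H` itself, so the conjugates `η^{x^j}` (`j < p`) are pairwise inequivalent. The induced space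
is the direct sum of the functions supported on the cosets `H x^j`, and by the orthogonality
relations `e_{η^{x^j}}` acts on it as the projection onto the `j`-th summand. Hence a nonzero
invariant subspace contains a nonzero function supported on a single coset, and then, `η` being
irreducible, all of them. Conjugating by `x^j` only translates functions, so `η^{x^j}↑ ≅ η↑`.
Finally `χ_{η↑}` is `∑ⱼ χ_{η^{x^j}}` on `H` and vanishes off `H`, and `deg η↑ = p · deg η`,
which gives the formula for `e_{η↑}`.
-/

open LinearMap Module

lemma LinearMap.trace_eq_sum_trace_comp {R M N ι : Type*} [CommRing R] [AddCommGroup M]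
    [Module R M] [Module.Free R M] [Module.Finite R M] [AddCommGroup N] [Module R N]
    [Module.Free R N] [Module.Finite R N] (s : Finset ι) (i : ι → M →ₗ[R] N)
    (π : ι → N →ₗ[R] M) (hiπ : ∑ j ∈ s, i j ∘ₗ π j = LinearMap.id) (T : Module.End R N) :
    trace R N T = ∑ j ∈ s, trace R M (π j ∘ₗ T ∘ₗ i j) := by
  have hT : T = ∑ j ∈ s, (T ∘ₗ i j) ∘ₗ π j :=
    LinearMap.ext fun v => by simpa using congr(T ($hiπ v)).symm
  conv_lhs => rw [hT, map_sum]
  exact Finset.sum_congr rfl fun j _ => trace_comp_comm' _ _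

lemma LinearMap.trace_eq_sum_coord {R M ι : Type*} [CommRing R] [AddCommGroup M] [Module R M]
    [Fintype ι] [DecidableEq ι] (b : Basis ι R M) (T : Module.End R M) :
    trace R M T = ∑ i, b.coord i (T (b i)) := by
  simp [trace_eq_matrix_trace R b, Matrix.trace, LinearMap.toMatrix_apply]

lemma RepEquiv.trace_eq {k Γ V W : Type*} [Field k] [Group Γ] [AddCommGroup V] [Module k V]
    [AddCommGroup W] [Module k W] {σ : Representation k Γ V} {τ : Representation k Γ W}
    (h : RepEquiv σ τ) (g : Γ) : trace k V (σ g) = trace k W (τ g) := by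
  obtain ⟨e, he⟩ := h
  have : τ g = e.conj (σ g) := by
    ext v
    rw [LinearEquiv.conj_apply_apply, he, e.apply_symm_apply]
  rw [this, trace_conj']

namespace IsIrreducibleRep

variable {Γ V W : Type*} [Group Γ] [AddCommGroup V] [Module ℂ V] [AddCommGroup W] [Module ℂ W]
  {σ : Representation ℂ Γ V} {τ : Representation ℂ Γ W}

lemma comp_of_surjective {K : Type*} [Group K] (hσ : IsIrreducibleRep σ) {φ : K →* Γ}
    (hφ : Function.Surjective φ) : IsIrreducibleRep (σ.comp φ) := by
  refine ⟨hσ.1, fun U hU => hσ.2 U fun g v hv => ?_⟩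
  obtain ⟨k, rfl⟩ := hφ g
  exact hU k v hv

lemma repEquiv_of_ne_zero (hσ : IsIrreducibleRep σ) (hτ : IsIrreducibleRep τ)
    {T : V →ₗ[ℂ] W} (hT : σ.IsIntertwiningMap τ T) (hT0 : T ≠ 0) : RepEquiv σ τ := by
  have hker : ker T = ⊥ := (hσ.2 (ker T) fun g v hv => by
    rw [mem_ker] at hv ⊢; rw [hT.isIntertwining, hv, map_zero]).resolve_right
    fun h => hT0 (ker_eq_top.mp h)
  have hrange : range T = ⊤ := (hτ.2 (range T) fun g _ ⟨v, hv⟩ =>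
    ⟨σ g v, by rw [hT.isIntertwining, hv]⟩).resolve_left fun h => hT0 (range_eq_bot.mp h)
  exact ⟨.ofBijective T ⟨ker_eq_bot.mp hker, range_eq_top.mp hrange⟩, hT.isIntertwining⟩

lemma eq_smul_one_of_isIntertwiningMap [FiniteDimensional ℂ V] (hσ : IsIrreducibleRep σ)
    {T : Module.End ℂ V} (hT : σ.IsIntertwiningMap σ T) : ∃ c : ℂ, T = c • 1 := by
  have := hσ.1
  obtain ⟨c, hc⟩ := Module.End.exists_eigenvalue T
  refine ⟨c, sub_eq_zero.mp ?_⟩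
  have hker := hσ.2 (ker (T - c • 1)) fun g v hv => by
    rw [mem_ker, LinearMap.sub_apply, LinearMap.smul_apply, Module.End.one_apply,
      sub_eq_zero] at hv ⊢
    rw [hT.isIntertwining, hv, map_smul]
  refine ker_eq_top.mp (hker.resolve_left ?_)
  rw [← Module.End.eigenspace_def]
  exact hc

end IsIrreducibleRep

section Orthogonality

variable {Γ V W : Type*} [Group Γ] [AddCommGroup V] [Module ℂ V] [AddCommGroup W] [Module ℂ W]
  {σ : Representation ℂ Γ V} {τ : Representation ℂ Γ W}

lemma trace_linHom_self (σ : Representation ℂ Γ V) [FiniteDimensional ℂ V] (g : Γ)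
    (A : Module.End ℂ V) : trace ℂ V (σ.linHom σ g A) = trace ℂ V A := by
  have hinv : σ g⁻¹ ∘ₗ σ g = LinearMap.id := by ext; simp
  rw [Representation.linHom_apply, trace_comp_comm', comp_assoc, hinv, comp_id]

variable [Fintype Γ]

lemma isIntertwiningMap_sum_linHom (σ : Representation ℂ Γ V) (τ : Representation ℂ Γ W)
    (A : V →ₗ[ℂ] W) : σ.IsIntertwiningMap τ (∑ g, σ.linHom τ g A) := by
  refine (Representation.mem_linHom_invariants_iff_isIntertwining _).mp fun g => ?_
  rw [← Representation.linHom_apply, map_sum]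
  simp_rw [← Module.End.mul_apply, ← map_mul]
  exact Fintype.sum_equiv (Equiv.mulLeft g) _ _ fun _ => rfl

lemma sum_trace_smul_apply {ι : Type*} [Fintype ι] [DecidableEq ι] (σ : Representation ℂ Γ V)
    (τ : Representation ℂ Γ W) (b : Basis ι ℂ V) (w : W) :
    (∑ g, trace ℂ V (σ g⁻¹) • τ g) w =
      ∑ i, (∑ g, σ.linHom τ g ((b.coord i).smulRight w)) (b i) := by
  simp only [LinearMap.sum_apply, LinearMap.smul_apply, trace_eq_sum_coord b, Finset.sum_smul,
    Representation.linHom_apply, comp_apply, smulRight_apply, map_smul]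
  exact Finset.sum_comm

variable [FiniteDimensional ℂ V]

lemma IsIrreducibleRep.sum_linHom_self (hσ : IsIrreducibleRep σ) (A : Module.End ℂ V) :
    ∑ g, σ.linHom σ g A = (Fintype.card Γ * trace ℂ V A / finrank ℂ V : ℂ) • 1 := by
  obtain ⟨c, hc⟩ := hσ.eq_smul_one_of_isIntertwiningMap (isIntertwiningMap_sum_linHom σ σ A)
  have := hσ.1
  have hd : (finrank ℂ V : ℂ) ≠ 0 := Nat.cast_ne_zero.mpr finrank_pos.ne'
  have htrace : c * finrank ℂ V = Fintype.card Γ * trace ℂ V A := by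
    have := congrArg (trace ℂ V) hc
    simp only [map_sum, trace_linHom_self, Finset.sum_const, Finset.card_univ, map_smul,
      trace_one, nsmul_eq_mul, smul_eq_mul] at this
    rw [← this]
  rw [hc, ← htrace, mul_div_cancel_right₀ _ hd]

theorem IsIrreducibleRep.sum_trace_smul_self (hσ : IsIrreducibleRep σ) :
    ∑ g, trace ℂ V (σ g⁻¹) • σ g = (Fintype.card Γ / finrank ℂ V : ℂ) • 1 := by
  classical
  let b := finBasis ℂ V
  ext w
  rw [sum_trace_smul_apply σ σ b w]
  simp only [hσ.sum_linHom_self, LinearMap.smul_apply, Module.End.one_apply, trace_smulRight]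
  conv_rhs => rw [← b.sum_repr w, Finset.smul_sum]
  refine Finset.sum_congr rfl fun i _ => ?_
  rw [smul_smul, Basis.coord_apply]
  ring_nf

theorem IsIrreducibleRep.sum_trace_smul_eq_zero
    (hσ : IsIrreducibleRep σ) (hτ : IsIrreducibleRep τ) (h : ¬ RepEquiv σ τ) :
    ∑ g, trace ℂ V (σ g⁻¹) • τ g = 0 := by
  classical
  have hzero (A : V →ₗ[ℂ] W) : ∑ g, σ.linHom τ g A = 0 := by
    by_contra hA
    exact h (hσ.repEquiv_of_ne_zero hτ (isIntertwiningMap_sum_linHom σ τ A) hA)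
  ext w
  rw [sum_trace_smul_apply σ τ (finBasis ℂ V) w]
  simp only [hzero, LinearMap.zero_apply, Finset.sum_const_zero]

end Orthogonality

lemma Subgroup.eq_or_eq_top_of_le_of_index_prime {G : Type*} [Group G] {H K : Subgroup G}
    (hHK : H ≤ K) (hp : H.index.Prime) : K = H ∨ K = ⊤ := by
  rcases (Nat.dvd_prime hp).mp (Subgroup.index_dvd_of_le hHK) with h | h
  · exact Or.inr (Subgroup.index_eq_one.mp h)
  · have hrel := Subgroup.relIndex_mul_index hHK
    rw [h, Nat.mul_eq_right hp.ne_zero] at hrel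
    exact Or.inl (le_antisymm (Subgroup.relIndex_eq_one.mp hrel) hHK)

lemma pciMap_eq_sum {K G W : Type*} [Group K] [Group G] [Fintype K] [AddCommGroup W]
    [Module ℂ W] (φ : K →* G) (η : Representation ℂ K W) :
    pciMap φ η = ∑ k : K, ((finrank ℂ W : ℂ) / Nat.card K * trace ℂ W (η k⁻¹)) •
      MonoidAlgebra.of ℂ G (φ k) := by
  rw [pciMap, Subsingleton.elim (Fintype.ofFinite K)]

section Conjugation

variable {G : Type*} [Group G] {H : Subgroup G} [H.Normal]

@[simp]
lemma coe_conjHom_apply (y : G) (h : H) : (conjHom H y h : G) = y * h * y⁻¹ := rfl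

lemma conjHom_mul_apply (y z : G) (h : H) :
    conjHom H (y * z) h = conjHom H y (conjHom H z h) := by
  ext
  simp [mul_assoc]

@[simp]
lemma conjHom_conjHom_inv_apply (y : G) (h : H) : conjHom H y (conjHom H y⁻¹ h) = h := by
  ext
  simp [mul_assoc]

lemma conjHom_surjective (y : G) : Function.Surjective (conjHom H y) :=
  fun h => ⟨_, conjHom_conjHom_inv_apply y h⟩

variable {W : Type*} [AddCommGroup W] [Module ℂ W] (η : Representation ℂ H W)

def charStabilizer : Subgroup G where
  carrier := {y | ∀ h, trace ℂ W (η (conjHom H y h)) = trace ℂ W (η h)}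
  mul_mem' {y z} hy hz h := by rw [conjHom_mul_apply]; exact (hy _).trans (hz h)
  one_mem' h := by congr 2; ext; simp
  inv_mem' {y} hy h := by rw [← hy (conjHom H y⁻¹ h), conjHom_conjHom_inv_apply]

lemma le_charStabilizer : H ≤ charStabilizer η := fun k hk h => by
  have : conjHom H k h = ⟨k, hk⟩ * h * (⟨k, hk⟩ : H)⁻¹ := by ext; simp
  rw [this, map_mul, trace_mul_comm, ← map_mul, inv_mul_cancel_left]

variable {η} in
lemma mul_inv_mem_charStabilizer {a b : G}
    (h : RepEquiv (η.comp (conjHom H a)) (η.comp (conjHom H b))) :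
    a * b⁻¹ ∈ charStabilizer η := fun k => by
  have := h.trace_eq (conjHom H b⁻¹ k)
  simp only [MonoidHom.comp_apply, conjHom_conjHom_inv_apply] at this
  rw [conjHom_mul_apply, this]

lemma pciMap_mem_center_of_charStabilizer_eq_top [Finite G] (h : charStabilizer η = ⊤) :
    pciMap H.subtype η ∈ Set.center (MonoidAlgebra ℂ G) := by
  have := Fintype.ofFinite H
  rw [Semigroup.mem_center_iff]
  intro z
  induction z using MonoidAlgebra.induction_on with
  | of g =>
    rw [pciMap_eq_sum, Finset.mul_sum, Finset.sum_mul]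
    refine Fintype.sum_equiv (MulAut.conjNormal g).toEquiv _ _ fun k => ?_
    have hk : (MulAut.conjNormal g).toEquiv k = conjHom H g k :=
      Subtype.ext (MulAut.conjNormal_apply g k)
    have hχ : trace ℂ W (η (conjHom H g k)⁻¹) = trace ℂ W (η k⁻¹) := by
      rw [← map_inv]
      exact (h ▸ Subgroup.mem_top g : g ∈ charStabilizer η) k⁻¹
    rw [hk, hχ, mul_smul_comm, smul_mul_assoc, ← map_mul, ← map_mul]
    congr 2
    simp [mul_assoc]
  | add a b ha hb => rw [add_mul, mul_add, ha, hb]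
  | smul c a ha => rw [smul_mul_assoc, mul_smul_comm, ha]

end Conjugation

section Transversal

variable {G : Type*} [Group G] {H : Subgroup G} [H.Normal] {x : G} {p : ℕ}

lemma mul_inv_mem_iff_mk_eq {y g : G} : y * g⁻¹ ∈ H ↔ (y : G ⧸ H) = g := by
  rw [QuotientGroup.eq_iff_div_mem, div_eq_mul_inv]

lemma eq_of_mul_inv_pow_mem (hord : orderOf (x : G ⧸ H) = p) {g : G} {i j : ℕ} (hi : i < p)
    (hj : j < p) (hgi : g * (x ^ i)⁻¹ ∈ H) (hgj : g * (x ^ j)⁻¹ ∈ H) : i = j := by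
  rw [mul_inv_mem_iff_mk_eq, QuotientGroup.mk_pow] at hgi hgj
  exact pow_injOn_Iio_orderOf (hord ▸ hi : i < _) (hord ▸ hj : j < _) (hgi.symm.trans hgj)

lemma exists_mul_inv_pow_mem [Finite G] (hord : orderOf (x : G ⧸ H) = p)
    (hx : ∀ g : G ⧸ H, g ∈ Subgroup.zpowers (x : G ⧸ H)) (g : G) :
    ∃ j < p, g * (x ^ j)⁻¹ ∈ H := by
  classical
  obtain ⟨j, hj, hjg⟩ := Finset.mem_image.mp (mem_zpowers_iff_mem_range_orderOf.mp (hx g))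
  refine ⟨j, hord ▸ Finset.mem_range.mp hj, ?_⟩
  rw [mul_inv_mem_iff_mk_eq, QuotientGroup.mk_pow]
  exact hjg.symm

end Transversal

section Induced

variable {G : Type*} [Group G] {H : Subgroup G} {W : Type*} [AddCommGroup W] [Module ℂ W]
  (η : Representation ℂ H W)

lemma inducedSpace_apply_of_mul_inv_mem (f : inducedSpace H η) {y g : G} (hy : y * g⁻¹ ∈ H) :
    (f : G → W) y = η ⟨y * g⁻¹, hy⟩ ((f : G → W) g) := by
  simpa using f.2 ⟨y * g⁻¹, hy⟩ g

open scoped Classical in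
noncomputable def inducedSingle (g : G) : W →ₗ[ℂ] inducedSpace H η where
  toFun w := ⟨fun y => if hy : y * g⁻¹ ∈ H then η ⟨y * g⁻¹, hy⟩ w else 0, fun h y => by
    have hmem : (h : G) * y * g⁻¹ ∈ H ↔ y * g⁻¹ ∈ H := by
      rw [mul_assoc, Subgroup.mul_mem_cancel_left _ h.2]
    dsimp only
    by_cases hy : y * g⁻¹ ∈ H
    · rw [dif_pos hy, dif_pos (hmem.mpr hy), ← Module.End.mul_apply, ← map_mul]
      congr 2
      ext
      simp [mul_assoc]
    · rw [dif_neg hy, dif_neg (hmem.not.mpr hy), map_zero]⟩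
  map_add' w w' := by
    ext y
    simp only [Submodule.coe_add, Pi.add_apply]
    split_ifs <;> simp
  map_smul' c w := by
    ext y
    simp only [Submodule.coe_smul, Pi.smul_apply, RingHom.id_apply]
    split_ifs <;> simp

def inducedEval (g : G) : inducedSpace H η →ₗ[ℂ] W :=
  (LinearMap.proj g).comp (inducedSpace H η).subtype

variable {η}

@[simp]
lemma inducedEval_apply (g : G) (f : inducedSpace H η) : inducedEval η g f = (f : G → W) g := rfl

lemma inducedSingle_apply_of_mem {g y : G} (w : W) (hy : y * g⁻¹ ∈ H) :
    (inducedSingle η g w : G → W) y = η ⟨y * g⁻¹, hy⟩ w := by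
  classical
  exact dif_pos hy

lemma inducedSingle_apply_of_notMem {g y : G} (w : W) (hy : y * g⁻¹ ∉ H) :
    (inducedSingle η g w : G → W) y = 0 := by
  classical
  exact dif_neg hy

@[simp]
lemma inducedSingle_apply_self (g : G) (w : W) : (inducedSingle η g w : G → W) g = w := by
  rw [inducedSingle_apply_of_mem w (by simp),
    show (⟨g * g⁻¹, _⟩ : H) = 1 from Subtype.ext (mul_inv_cancel g), map_one,
    Module.End.one_apply]

lemma inducedRep_inducedSingle (g' g : G) (w : W) :
    inducedRep H η g' (inducedSingle η g w) = inducedSingle η (g * g'⁻¹) w := by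
  ext y
  have hy : y * g' * g⁻¹ = y * (g * g'⁻¹)⁻¹ := by group
  show (inducedSingle η g w : G → W) (y * g') = _
  by_cases hmem : y * g' * g⁻¹ ∈ H
  · rw [inducedSingle_apply_of_mem w hmem, inducedSingle_apply_of_mem w (hy ▸ hmem)]
    simp_rw [hy]
  · rw [inducedSingle_apply_of_notMem w hmem, inducedSingle_apply_of_notMem w (hy ▸ hmem)]

lemma inducedSingle_mul_left (k : H) (g : G) (w : W) :
    inducedSingle η (k * g) w = inducedSingle η g (η k⁻¹ w) := by
  ext y
  have hy : y * (k * g)⁻¹ = y * g⁻¹ * (k : G)⁻¹ := by group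
  have hmem : y * (k * g)⁻¹ ∈ H ↔ y * g⁻¹ ∈ H := by
    rw [hy, Subgroup.mul_mem_cancel_right _ (H.inv_mem k.2)]
  by_cases hyg : y * g⁻¹ ∈ H
  · rw [inducedSingle_apply_of_mem w (hmem.mpr hyg), inducedSingle_apply_of_mem _ hyg,
      ← Module.End.mul_apply, ← map_mul]
    congr 2
    ext
    simp [mul_assoc]
  · rw [inducedSingle_apply_of_notMem w (hmem.not.mpr hyg),
      inducedSingle_apply_of_notMem _ hyg]

variable (η) in
lemma sum_inducedSingle_comp_inducedEval [Finite G] [H.Normal] {x : G} {p : ℕ}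
    (hord : orderOf (x : G ⧸ H) = p) (hx : ∀ g : G ⧸ H, g ∈ Subgroup.zpowers (x : G ⧸ H)) :
    ∑ j ∈ Finset.range p, inducedSingle η (x ^ j) ∘ₗ inducedEval η (x ^ j) = LinearMap.id := by
  ext f y
  obtain ⟨i, hi, hyi⟩ := exists_mul_inv_pow_mem hord hx y
  simp only [LinearMap.sum_apply, Submodule.coe_sum, Finset.sum_apply, LinearMap.comp_apply,
    LinearMap.id_apply]
  rw [Finset.sum_eq_single_of_mem i (Finset.mem_range.mpr hi)]
  · rw [inducedSingle_apply_of_mem _ hyi, inducedSpace_apply_of_mul_inv_mem η f hyi]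
    rfl
  · intro j hj hji
    exact inducedSingle_apply_of_notMem _
      fun hyj => hji (eq_of_mul_inv_pow_mem hord (Finset.mem_range.mp hj) hi hyj hyi)

end Induced

section InducedCharacter

variable {G : Type*} [Group G] [Finite G] {H : Subgroup G} [H.Normal] {W : Type*}
  [AddCommGroup W] [Module ℂ W] [FiniteDimensional ℂ W] (η : Representation ℂ H W) {x : G}
  {p : ℕ} (hord : orderOf (x : G ⧸ H) = p) (hx : ∀ g : G ⧸ H, g ∈ Subgroup.zpowers (x : G ⧸ H))
include hord hx

lemma trace_inducedRep_of_mem {g : G} (hg : g ∈ H) :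
    trace ℂ (inducedSpace H η) (inducedRep H η g) =
      ∑ j ∈ Finset.range p, trace ℂ W (η (conjHom H (x ^ j) ⟨g, hg⟩)) := by
  rw [trace_eq_sum_trace_comp _ _ _ (sum_inducedSingle_comp_inducedEval η hord hx)]
  refine Finset.sum_congr rfl fun j _ => congrArg (trace ℂ W) (LinearMap.ext fun w => ?_)
  exact inducedSingle_apply_of_mem w (Subgroup.Normal.conj_mem ‹_› g hg (x ^ j))

lemma trace_inducedRep_of_notMem {g : G} (hg : g ∉ H) :
    trace ℂ (inducedSpace H η) (inducedRep H η g) = 0 := by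
  rw [trace_eq_sum_trace_comp _ _ _ (sum_inducedSingle_comp_inducedEval η hord hx)]
  refine Finset.sum_eq_zero fun j _ => ?_
  convert (trace ℂ W).map_zero
  refine LinearMap.ext fun w => inducedSingle_apply_of_notMem w fun hmem => hg ?_
  simpa [mul_assoc] using Subgroup.Normal.conj_mem ‹_› _ hmem (x ^ j)⁻¹

lemma finrank_inducedSpace : finrank ℂ (inducedSpace H η) = p * finrank ℂ W := by
  have := trace_inducedRep_of_mem η hord hx H.one_mem
  rw [show (⟨1, H.one_mem⟩ : H) = 1 from rfl] at this
  simp only [map_one, trace_one, Finset.sum_const, Finset.card_range, nsmul_eq_mul] at this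
  exact_mod_cast this

theorem pciMap_inducedRep :
    pciMap (MonoidHom.id G) (inducedRep H η) =
      ∑ j ∈ Finset.range p, pciMap H.subtype (η.comp (conjHom H (x ^ j))) := by
  classical
  have := Fintype.ofFinite G
  have hcard : Nat.card G = p * Nat.card H := by
    rw [← Subgroup.index_mul_card H, Subgroup.index_eq_card,
      ← orderOf_eq_card_of_forall_mem_zpowers hx, hord]
  have hp0 : (p : ℂ) ≠ 0 := Nat.cast_ne_zero.mpr (hord ▸ (orderOf_pos _).ne')
  simp only [pciMap_eq_sum, MonoidHom.id_apply, Subgroup.coe_subtype]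
  rw [← Fintype.sum_subtype_add_sum_subtype (· ∈ H), add_eq_left.mpr (Fintype.sum_eq_zero _
    fun g => by rw [trace_inducedRep_of_notMem η hord hx (inv_mem_iff.not.mpr g.2), mul_zero,
      zero_smul]), Finset.sum_comm]
  refine Finset.sum_congr rfl fun k _ => ?_
  rw [trace_inducedRep_of_mem η hord hx (H.inv_mem k.2), finrank_inducedSpace η hord hx, hcard,
    Finset.mul_sum, Finset.sum_smul]
  refine Finset.sum_congr rfl fun j _ => ?_
  push_cast
  rw [mul_div_mul_left _ _ hp0]
  rfl

end InducedCharacter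

section ConjugateInduced

variable {G : Type*} [Group G] {H : Subgroup G} [H.Normal] {W : Type*} [AddCommGroup W]
  [Module ℂ W] (η : Representation ℂ H W)

lemma mem_inducedSpace_comp_conjHom_iff (y : G) {f : G → W} :
    (fun g => f (y * g)) ∈ inducedSpace H (η.comp (conjHom H y)) ↔ f ∈ inducedSpace H η := by
  refine ⟨fun hf h g => ?_, fun hf h g => ?_⟩
  · simpa [mul_assoc] using hf (conjHom H y⁻¹ h) (y⁻¹ * g)
  · simpa [mul_assoc] using hf (conjHom H y h) (y * g)

theorem repEquiv_inducedRep_comp_conjHom (y : G) :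
    RepEquiv (inducedRep H (η.comp (conjHom H y))) (inducedRep H η) :=
  ⟨{ toFun f := ⟨fun g => (f : G → W) (y⁻¹ * g),
        (mem_inducedSpace_comp_conjHom_iff η y).mp (by simp)⟩
     invFun f := ⟨fun g => (f : G → W) (y * g), (mem_inducedSpace_comp_conjHom_iff η y).mpr f.2⟩
     map_add' _ _ := rfl
     map_smul' _ _ := rfl
     left_inv f := by ext; simp
     right_inv f := by ext; simp },
    fun g f => Subtype.ext <| funext fun g' =>
      show (f : G → W) (y⁻¹ * g' * g) = (f : G → W) (y⁻¹ * (g' * g)) by rw [mul_assoc]⟩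

end ConjugateInduced

section Irreducibility

variable {G : Type*} [Group G] {H : Subgroup G} [H.Normal] {W : Type*} [AddCommGroup W]
  [Module ℂ W] (η : Representation ℂ H W)

lemma inducedSpace_apply_mul (f : inducedSpace H η) {y g : G} (hy : y * g⁻¹ ∈ H) (h : H) :
    (f : G → W) (y * h) = η ⟨y * g⁻¹, hy⟩ ((η.comp (conjHom H g)) h ((f : G → W) g)) := by
  have hyh : y * h * g⁻¹ = y * g⁻¹ * (conjHom H g h : G) := by simp [mul_assoc]
  rw [inducedSpace_apply_of_mul_inv_mem η f (hyh ▸ H.mul_mem hy (conjHom H g h).2),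
    MonoidHom.comp_apply, ← Module.End.mul_apply, ← map_mul]
  congr 2
  exact Subtype.ext hyh

lemma sum_smul_inducedRep_apply [Fintype H] (c : H → ℂ) (f : inducedSpace H η) {y g : G}
    (hy : y * g⁻¹ ∈ H) :
    ((∑ h : H, c h • inducedRep H η h) f : G → W) y =
      η ⟨y * g⁻¹, hy⟩ ((∑ h : H, c h • (η.comp (conjHom H g)) h) ((f : G → W) g)) := by
  simp only [LinearMap.sum_apply, Submodule.coe_sum, Finset.sum_apply, LinearMap.smul_apply,
    Submodule.coe_smul, Pi.smul_apply, map_sum, map_smul]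
  exact Finset.sum_congr rfl fun h _ => congrArg _ (inducedSpace_apply_mul η f hy h)

variable [Finite G] {η} {x : G} {p : ℕ}
  (hord : orderOf (x : G ⧸ H) = p) (hx : ∀ g : G ⧸ H, g ∈ Subgroup.zpowers (x : G ⧸ H))
include hord hx

/-- Up to the factor `|H| / deg η`, this is the action of `e_{η^{x^j}}`: the projection onto the
functions supported on `H x^j`. -/
lemma sum_trace_smul_inducedRep_pow [Fintype H] [FiniteDimensional ℂ W] (hη : IsIrreducibleRep η)
    (hdistinct : ∀ i j, i < p → j < p → i ≠ j →
      ¬ RepEquiv (η.comp (conjHom H (x ^ i))) (η.comp (conjHom H (x ^ j))))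
    {j : ℕ} (hj : j < p) (f : inducedSpace H η) :
    (∑ h : H, trace ℂ W ((η.comp (conjHom H (x ^ j))) h⁻¹) • inducedRep H η h) f =
      (Fintype.card H / finrank ℂ W : ℂ) • inducedSingle η (x ^ j) ((f : G → W) (x ^ j)) := by
  have hirr (k : G) : IsIrreducibleRep (η.comp (conjHom H k)) :=
    hη.comp_of_surjective (conjHom_surjective k)
  ext y
  obtain ⟨i, hi, hyi⟩ := exists_mul_inv_pow_mem hord hx y
  rw [sum_smul_inducedRep_apply η _ f hyi, Submodule.coe_smul, Pi.smul_apply]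
  rcases eq_or_ne i j with rfl | hij
  · rw [(hirr _).sum_trace_smul_self, inducedSingle_apply_of_mem _ hyi, LinearMap.smul_apply,
      Module.End.one_apply, map_smul]
  · rw [(hirr _).sum_trace_smul_eq_zero (hirr _) (hdistinct j i hj hi hij.symm),
      LinearMap.zero_apply, map_zero, inducedSingle_apply_of_notMem _ fun hyj =>
        hij (eq_of_mul_inv_pow_mem hord hi hj hyi hyj), smul_zero]

/-- The `v` with `inducedSingle η g v ∈ U` for all `g` form an `η`-invariant subspace of `W`. -/
lemma eq_top_of_inducedSingle_mem (hη : IsIrreducibleRep η) {U : Submodule ℂ (inducedSpace H η)}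
    (hU : ∀ g f, f ∈ U → inducedRep H η g f ∈ U) {g₀ : G} {v : W} (hv : v ≠ 0)
    (hg₀ : inducedSingle η g₀ v ∈ U) : U = ⊤ := by
  have hM : ⨅ g, U.comap (inducedSingle η g) = ⊤ := by
    refine (hη.2 _ fun k w hw => ?_).resolve_left ?_
    · simp only [Submodule.mem_iInf, Submodule.mem_comap] at hw ⊢
      intro g
      have := hw ((k⁻¹ : H) * g)
      rwa [inducedSingle_mul_left, inv_inv] at this
    · refine (Submodule.ne_bot_iff _).mpr ⟨v, ?_, hv⟩
      simp only [Submodule.mem_iInf, Submodule.mem_comap]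
      intro g
      simpa [inducedRep_inducedSingle] using hU (g⁻¹ * g₀) _ hg₀
  rw [Submodule.eq_top_iff']
  intro f
  rw [← LinearMap.id_apply (R := ℂ) f, ← sum_inducedSingle_comp_inducedEval η hord hx,
    LinearMap.sum_apply]
  exact U.sum_mem fun j _ => (Submodule.mem_iInf _).mp (hM ▸ Submodule.mem_top) (x ^ j)

theorem isIrreducibleRep_inducedRep [FiniteDimensional ℂ W] (hη : IsIrreducibleRep η)
    (hdistinct : ∀ i j, i < p → j < p → i ≠ j →
      ¬ RepEquiv (η.comp (conjHom H (x ^ i))) (η.comp (conjHom H (x ^ j)))) :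
    IsIrreducibleRep (inducedRep H η) := by
  have := hη.1
  have := Fintype.ofFinite H
  refine ⟨?_, fun U hU => or_iff_not_imp_left.mpr fun hU0 => ?_⟩
  · refine Function.Injective.nontrivial (f := inducedSingle η 1) fun v w hvw => ?_
    simpa using congrArg (fun f : inducedSpace H η => (f : G → W) 1) hvw
  obtain ⟨f, hfU, hf0⟩ := Submodule.exists_mem_ne_zero_of_ne_bot hU0
  obtain ⟨j, hj, hfj⟩ : ∃ j ∈ Finset.range p, (f : G → W) (x ^ j) ≠ 0 := by
    by_contra! h
    refine hf0 ?_
    rw [← LinearMap.id_apply (R := ℂ) f, ← sum_inducedSingle_comp_inducedEval η hord hx,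
      LinearMap.sum_apply]
    exact Finset.sum_eq_zero fun j hj => by simp [h j hj]
  refine eq_top_of_inducedSingle_mem hord hx hη hU (g₀ := x ^ j) hfj ?_
  have hsum := sum_trace_smul_inducedRep_pow hord hx hη hdistinct (Finset.mem_range.mp hj) f
  have hmem : (∑ h : H, trace ℂ W ((η.comp (conjHom H (x ^ j))) h⁻¹) • inducedRep H η h) f ∈ U := by
    simp only [LinearMap.sum_apply, LinearMap.smul_apply]
    exact U.sum_mem fun h _ => U.smul_mem _ (hU _ _ hfU)
  rw [hsum] at hmem
  have hc : (Fintype.card H / finrank ℂ W : ℂ) ≠ 0 :=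
    div_ne_zero (Nat.cast_ne_zero.mpr Fintype.card_ne_zero) (Nat.cast_ne_zero.mpr finrank_pos.ne')
  exact (U.smul_mem_iff hc).mp hmem

end Irreducibility

section Distinctness

variable {G : Type*} [Group G] [Finite G] {H : Subgroup G} [H.Normal] {W : Type*}
  [AddCommGroup W] [Module ℂ W] {η : Representation ℂ H W} {x : G} {p : ℕ}

/-- Since `H` has prime index, the inertia group of `η` is `H` or `G`; the latter would make
`e_η` central. -/
theorem not_repEquiv_comp_conjHom_pow (hp : p.Prime) (hidx : H.index = p)
    (hord : orderOf (x : G ⧸ H) = p) (hnc : pciMap H.subtype η ∉ Set.center (MonoidAlgebra ℂ G))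
    {i j : ℕ} (hi : i < p) (hj : j < p) (hij : i ≠ j) :
    ¬ RepEquiv (η.comp (conjHom H (x ^ i))) (η.comp (conjHom H (x ^ j))) := by
  intro h
  have hstab : charStabilizer η = H :=
    (Subgroup.eq_or_eq_top_of_le_of_index_prime (le_charStabilizer η) (hidx ▸ hp)).resolve_right
      fun htop => hnc (pciMap_mem_center_of_charStabilizer_eq_top η htop)
  have hmem := mul_inv_mem_charStabilizer h
  rw [hstab] at hmem
  exact hij (eq_of_mul_inv_pow_mem hord hi hj (by simp) hmem)

end Distinctness

/-- Let `G` be a finite group, `H ⊴ G` of prime index `p`, `x ∈ G` with `xH`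
generating `G/H`, and `η` an irreducible complex representation of `H` with primitive
central idempotent `e_η ∈ ℂ[H] ⊆ ℂ[G]`.  If `e_η` is not central in `ℂ[G]`, then the
induced representations `η↑`, `η^x↑`, …, `η^{x^{p-1}}↑` are all equivalent to a single
irreducible representation `ρ = η↑` of `G`, and
`e_ρ = e_η + e_{η^x} + ⋯ + e_{η^{x^{p-1}}}`, where `η^{x^j} (h) = η (x^j h x^{-j})`. -/
theorem stmt17 {G : Type*} [Group G] [Fintype G] (H : Subgroup G) [H.Normal]
    (p : ℕ) (hp : p.Prime) (hidx : H.index = p)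
    (x : G) (hx : ∀ g : G ⧸ H, g ∈ Subgroup.zpowers (QuotientGroup.mk x : G ⧸ H))
    {W : Type*} [AddCommGroup W] [Module ℂ W] [FiniteDimensional ℂ W]
    (η : Representation ℂ H W) (hη : IsIrreducibleRep η)
    (hnc : pciMap H.subtype η ∉ Set.center (MonoidAlgebra ℂ G)) :
    IsIrreducibleRep (inducedRep H η) ∧
    (∀ j : ℕ, j < p →
      RepEquiv (inducedRep H (η.comp (conjHom H (x ^ j)))) (inducedRep H η)) ∧
    pciMap (MonoidHom.id G) (inducedRep H η) =
      ∑ j ∈ Finset.range p, pciMap H.subtype (η.comp (conjHom H (x ^ j))) := by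
  have hord : orderOf (x : G ⧸ H) = p := by
    rw [orderOf_eq_card_of_forall_mem_zpowers hx, ← Subgroup.index_eq_card, hidx]
  exact ⟨isIrreducibleRep_inducedRep hord hx hη fun i j hi hj hij =>
      not_repEquiv_comp_conjHom_pow hp hidx hord hnc hi hj hij,
    fun j _ => repEquiv_inducedRep_comp_conjHom η (x ^ j), pciMap_inducedRep η hord hx⟩
end
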